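/- arXiv:2601.14090 — 2 statements merged into one kernel-verified Lean document; each statement's English description precedes it below -/
import Mathlib

section
/- Let (p1, p2, p3) be a Markov triple and q1 an integer with q1 * p2 ≡ 3 * p3 (mod p1). Then p1 divides q1 * p2 - 3 * p3, and the integer q2 := (q1*p2 - 3*p3)/p1 satisfies q2 * p1 ≡ -3 * p3 (mod p2), i.e. q2 is a companion number of p2. -/
theorem markov_companion_of_p2_general (p1 p2 p3 q1 : ℤ) (hq : q1 * p2 ≡ 3 * p3 [ZMOD p1]) :
    p1 ∣ (q1 * p2 - 3 * p3) ∧ ((q1 * p2 - 3 * p3) / p1) * p1 ≡ -(3 * p3) [ZMOD p2] := by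
  have hdvd : p1 ∣ q1 * p2 - 3 * p3 := hq.symm.dvd
  refine ⟨hdvd, ?_⟩
  rw [Int.ediv_mul_cancel hdvd]
  exact Int.modEq_iff_dvd.mpr ⟨-q1, by ring⟩

theorem markov_companion_of_p2 (p1 p2 p3 q1 : ℤ) (h1 : 0 < p1) (h2 : 0 < p2) (h3 : 0 < p3)
    (h : p1^2 + p2^2 + p3^2 = 3*p1*p2*p3) (hq : q1 * p2 ≡ 3 * p3 [ZMOD p1]) :
    p1 ∣ (q1 * p2 - 3 * p3) ∧ ((q1 * p2 - 3 * p3) / p1) * p1 ≡ -(3 * p3) [ZMOD p2] :=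
  markov_companion_of_p2_general p1 p2 p3 q1 hq
end

section
/- Let (p1, p2, p3) be a Markov triple and q1, q2 integers with q1*p2 - q2*p1 = 3*p3. Then the vectors v1 = (p1*q1 - 1, p1^2) and v2 = (p2*q2 + 1, p2^2) in Z^2 satisfy |det(v1, v2)| = p3^2, i.e. |(p1*q1 - 1)*p2^2 - p1^2*(p2*q2 + 1)| = p3^2. -/
theorem markov_det_eq_sq {R : Type*} [CommRing R] {p1 p2 p3 q1 q2 : R}
    (h : p1^2 + p2^2 + p3^2 = 3*p1*p2*p3) (hq : q1 * p2 - q2 * p1 = 3 * p3) :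
    (p1*q1 - 1) * p2^2 - p1^2 * (p2*q2 + 1) = p3^2 := by
  linear_combination p1 * p2 * hq - h

theorem markov_angle_determinant_general (p1 p2 p3 q1 q2 : ℤ)
    (h : p1^2 + p2^2 + p3^2 = 3*p1*p2*p3) (hq : q1 * p2 - q2 * p1 = 3 * p3) :
    |(p1*q1 - 1) * p2^2 - p1^2 * (p2*q2 + 1)| = p3^2 := by
  rw [markov_det_eq_sq h hq, abs_of_nonneg (sq_nonneg p3)]

theorem markov_angle_determinant (p1 p2 p3 q1 q2 : ℤ) (h1 : 0 < p1) (h2 : 0 < p2) (h3 : 0 < p3)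
    (h : p1^2 + p2^2 + p3^2 = 3*p1*p2*p3) (hq : q1 * p2 - q2 * p1 = 3 * p3) :
    |(p1*q1 - 1) * p2^2 - p1^2 * (p2*q2 + 1)| = p3^2 :=
  markov_angle_determinant_general p1 p2 p3 q1 q2 h hq
end
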